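/- arXiv:1507.05844 — 6 statements merged into one kernel-verified Lean document; each statement's English description precedes it below -/
import Mathlib

section
/- For any positive definite n×n matrix A, vector b, and any x, x° with Ax° = b, if x⁺ = x + ((b_i − (Ax)_i)/A_{ii}) e_i for a coordinate index i, then ‖x⁺ − x°‖²_A = ‖x − x°‖²_A − ‖x⁺ − x‖²_A, where ‖z‖²_A = z*Az. -/
open Matrix

/-!
Write `d = x⁺ - x` and `v = x⁺ - x°`, so that `x - x° = v - d`. The step moves only along `eᵢ`
and is chosen so that the `i`-th residual vanishes, `(A x⁺)ᵢ = bᵢ = (A x°)ᵢ`; hence `d` is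
`A`-orthogonal to `v`, and expanding `(v - d)ᵀ A (v - d)` with `A` symmetric gives Pythagoras.
-/

namespace Matrix

variable {ι R : Type*} [Fintype ι] [CommRing R]

theorem IsSymm.dotProduct_mulVec_comm {A : Matrix ι ι R} (hA : A.IsSymm) (v w : ι → R) :
    v ⬝ᵥ A *ᵥ w = w ⬝ᵥ A *ᵥ v := by
  rw [dotProduct_mulVec, ← mulVec_transpose, hA.eq, dotProduct_comm]

theorem IsSymm.dotProduct_mulVec_sub_self_of_orthogonal {A : Matrix ι ι R} (hA : A.IsSymm)
    {v d : ι → R} (h : d ⬝ᵥ A *ᵥ v = 0) :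
    (v - d) ⬝ᵥ A *ᵥ (v - d) = v ⬝ᵥ A *ᵥ v + d ⬝ᵥ A *ᵥ d := by
  have h' : v ⬝ᵥ A *ᵥ d = 0 := by rw [hA.dotProduct_mulVec_comm, h]
  simp only [mulVec_sub, sub_dotProduct, dotProduct_sub, h, h']
  ring

end Matrix

section CoordinateDescent

variable {ι K : Type*} [Fintype ι] [DecidableEq ι] [Field K]

def coordinateStep (A : Matrix ι ι K) (b x : ι → K) (i : ι) : ι → K :=
  x + ((b i - (A *ᵥ x) i) / A i i) • Pi.single i 1

theorem coordinateStep_sub_self (A : Matrix ι ι K) (b x : ι → K) (i : ι) :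
    coordinateStep A b x i - x = Pi.single i ((b i - (A *ᵥ x) i) / A i i) := by
  rw [coordinateStep, add_sub_cancel_left, ← Pi.single_smul, smul_eq_mul, mul_one]

theorem mulVec_coordinateStep_apply_self {A : Matrix ι ι K} (b x : ι → K) {i : ι}
    (hi : A i i ≠ 0) : (A *ᵥ coordinateStep A b x i) i = b i := by
  simp only [coordinateStep, mulVec_add, mulVec_smul, mulVec_single_one, Pi.add_apply,
    Pi.smul_apply, col_apply, smul_eq_mul]
  field_simp
  ring

theorem coordinateStep_sub_self_dotProduct_mulVec_sub_eq_zero (A : Matrix ι ι K)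
    {b x x₀ : ι → K} (hx₀ : A *ᵥ x₀ = b) (i : ι) :
    (coordinateStep A b x i - x) ⬝ᵥ A *ᵥ (coordinateStep A b x i - x₀) = 0 := by
  rw [coordinateStep_sub_self, single_dotProduct, mulVec_sub, Pi.sub_apply, hx₀]
  by_cases hi : A i i = 0
  · rw [hi, div_zero, zero_mul]
  · rw [mulVec_coordinateStep_apply_self b x hi, sub_self, mul_zero]

end CoordinateDescent

/-- Pythagorean identity for one coordinate-descent step on a positive definite
system Ax = b:  ‖x⁺ − x°‖²_A = ‖x − x°‖²_A − ‖x⁺ − x‖²_A. -/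
theorem coordinate_descent_pythagoras {n : ℕ} (A : Matrix (Fin n) (Fin n) ℝ)
    (hA : A.PosDef) (b x x0 : Fin n → ℝ) (hx0 : A.mulVec x0 = b) (i : Fin n)
    (xp : Fin n → ℝ)
    (hxp : xp = x + ((b i - A.mulVec x i) / A i i) • (Pi.single i 1 : Fin n → ℝ)) :
    (xp - x0) ⬝ᵥ A.mulVec (xp - x0) =
      (x - x0) ⬝ᵥ A.mulVec (x - x0) - (xp - x) ⬝ᵥ A.mulVec (xp - x) := by
  change xp = coordinateStep A b x i at hxp
  have hsymm : A.IsSymm := isHermitian_iff_isSymm.mp hA.isHermitian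
  have horth := hxp ▸ coordinateStep_sub_self_dotProduct_mulVec_sub_eq_zero A hx0 i
  have hpyth := hsymm.dotProduct_mulVec_sub_self_of_orthogonal horth
  rw [sub_sub_sub_cancel_left] at hpyth
  rw [hpyth]
  ring
end

section
/- For a positive definite matrix A with coordinate descent update x⁺ = x + ((b_i − (Ax)_i)/A_{ii}) e_i where index i is chosen with probability A_{ii}/Tr(A), the conditional expected squared A-norm step satisfies E‖x⁺ − x‖²_A = ‖b − Ax‖²/Tr(A). -/
open Matrix

theorem smul_single_dotProduct_mulVec_smul_single {m R : Type*} [Fintype m] [DecidableEq m]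
    [CommSemiring R] (A : Matrix m m R) (c : R) (i : m) :
    (c • Pi.single i 1) ⬝ᵥ A *ᵥ (c • Pi.single i 1) = c ^ 2 * A i i := by
  rw [mulVec_smul, smul_dotProduct, dotProduct_smul, single_dotProduct, mulVec_single_one]
  simp only [smul_eq_mul, one_mul, col_apply]
  ring

/-- Expected squared A-norm of the coordinate descent step, with coordinate i
chosen with probability A_{ii}/Tr(A):  E‖x⁺ − x‖²_A = ‖b − Ax‖²/Tr(A). -/
theorem coordinate_descent_expected_step {n : ℕ} (A : Matrix (Fin n) (Fin n) ℝ)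
    (hA : A.PosDef) (b x : Fin n → ℝ) (xp : Fin n → Fin n → ℝ)
    (hxp : ∀ i, xp i = x + ((b i - A.mulVec x i) / A i i) • (Pi.single i 1 : Fin n → ℝ)) :
    ∑ i, (A i i / A.trace) * ((xp i - x) ⬝ᵥ A.mulVec (xp i - x)) =
      (∑ i, (b i - A.mulVec x i) ^ 2) / A.trace := by
  rw [Finset.sum_div]
  refine Finset.sum_congr rfl fun i _ => ?_
  rw [hxp i, add_sub_cancel_left, smul_single_dotProduct_mulVec_smul_single]
  field_simp [hA.diag_pos.ne']
end

section
/- One step of randomized coordinate descent on the positive definite system Ax = b (with Ax° = b, coordinate i chosen with probability A_{ii}/Tr(A), update x⁺ = x + ((b_i − (Ax)_i)/A_{ii}) e_i) satisfies E‖x⁺ − x°‖²_A ≤ (1 − σ_min(A)/Tr(A))‖x − x°‖²_A. -/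
/-!
Write `e = x - x₀` and `g = A e`. The `i`-th coordinate step is exact line search along `eᵢ`: it
lowers the energy `eᵀ A e` by `gᵢ² / Aᵢᵢ`. Averaging with the weights `Aᵢᵢ / Tr A` gives the
expected decrease `‖g‖² / Tr A`, and `‖A e‖² ≥ σ_min · eᵀ A e` because the matrix
`A² - σ_min A = f(A)`, with `f t = t (t - σ_min)` nonnegative on the spectrum, is positive
semidefinite.
-/

open Matrix

namespace Matrix

variable {ι R : Type*} [Fintype ι]

-- `A.trace / A.trace` rather than `1`, so that the identity also holds when the trace vanishes.
lemma sum_diag_div_trace_mul [Field R] {A : Matrix ι ι R} (hA : ∀ i, A i i ≠ 0) (s : R)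
    (g : ι → R) :
    ∑ i, A i i / A.trace * (s - g i ^ 2 / A i i) = A.trace / A.trace * s - g ⬝ᵥ g / A.trace := by
  have hterm : ∀ i, A i i / A.trace * (s - g i ^ 2 / A i i) =
      A i i * s / A.trace - g i * g i / A.trace := by
    intro i
    field_simp [hA i]
  simp only [hterm, Finset.sum_sub_distrib, ← Finset.sum_div, ← Finset.sum_mul, dotProduct]
  rw [trace, div_mul_eq_mul_div]
  rfl

variable [DecidableEq ι]

def coordinateDescentStep [Field R] (A : Matrix ι ι R) (b x : ι → R) (i : ι) : ι → R :=
  x + ((b i - (A *ᵥ x) i) / A i i) • Pi.single i 1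

lemma coordinateDescentStep_sub_solution [Field R] (A : Matrix ι ι R) {b x₀ : ι → R}
    (hx₀ : A *ᵥ x₀ = b) (x : ι → R) (i : ι) :
    coordinateDescentStep A b x i - x₀ =
      (x - x₀) - ((A *ᵥ (x - x₀)) i / A i i) • Pi.single i 1 := by
  ext j
  simp only [coordinateDescentStep, ← hx₀, mulVec_sub, Pi.sub_apply, Pi.add_apply, Pi.smul_apply,
    smul_eq_mul]
  ring

lemma IsSymm.dotProduct_mulVec_sub_smul_single [CommRing R] {A : Matrix ι ι R} (hA : A.IsSymm)
    (r : ι → R) (i : ι) (c : R) :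
    (r - c • Pi.single i 1) ⬝ᵥ A *ᵥ (r - c • Pi.single i 1) =
      r ⬝ᵥ A *ᵥ r - 2 * c * (A *ᵥ r) i + c ^ 2 * A i i := by
  have hleft : r ⬝ᵥ A *ᵥ Pi.single i 1 = (A *ᵥ r) i := by
    rw [dotProduct_mulVec, ← mulVec_transpose, hA.eq, dotProduct_single, mul_one]
  have hright : Pi.single i 1 ⬝ᵥ A *ᵥ r = (A *ᵥ r) i := by rw [single_dotProduct, one_mul]
  have hdiag : Pi.single i 1 ⬝ᵥ A *ᵥ Pi.single i 1 = A i i := by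
    rw [single_dotProduct, one_mul, mulVec_single_one, col_apply]
  simp only [mulVec_sub, mulVec_smul, sub_dotProduct, dotProduct_sub, smul_dotProduct,
    dotProduct_smul, hleft, hright, hdiag, smul_eq_mul]
  ring

lemma IsSymm.dotProduct_mulVec_coordinateDescentStep_sub_solution [Field R] {A : Matrix ι ι R}
    (hA : A.IsSymm) {b x₀ : ι → R} (hx₀ : A *ᵥ x₀ = b) (x : ι → R) {i : ι} (hAi : A i i ≠ 0) :
    (coordinateDescentStep A b x i - x₀) ⬝ᵥ A *ᵥ (coordinateDescentStep A b x i - x₀) =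
      (x - x₀) ⬝ᵥ A *ᵥ (x - x₀) - (A *ᵥ (x - x₀)) i ^ 2 / A i i := by
  rw [coordinateDescentStep_sub_solution A hx₀, hA.dotProduct_mulVec_sub_smul_single]
  field_simp
  ring

lemma PosSemidef.mul_self_sub_smul {A : Matrix ι ι ℝ} (hA : A.PosSemidef) {σ : ℝ}
    (hσ : σ ∈ lowerBounds (spectrum ℝ A)) : (A * A - σ • A).PosSemidef := by
  open MatrixOrder in
  have hsa : IsSelfAdjoint A := hA.1
  have hcfc : cfc (fun t : ℝ => t * t - σ * t) A = A * A - σ • A := by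
    rw [cfc_sub .., cfc_mul .., cfc_const_mul .., cfc_id' ..]
  rw [← nonneg_iff_posSemidef, ← hcfc]
  -- `t * t - σ * t = t * (t - σ) ≥ 0` on the spectrum, which lies in `[max 0 σ, ∞)`.
  refine cfc_nonneg fun t ht => ?_
  have ht₀ : 0 ≤ t := spectrum_nonneg_of_nonneg hA.nonneg ht
  nlinarith [hσ ht]

lemma PosSemidef.mul_dotProduct_mulVec_le {A : Matrix ι ι ℝ} (hA : A.PosSemidef) {σ : ℝ}
    (hσ : σ ∈ lowerBounds (spectrum ℝ A)) (r : ι → ℝ) :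
    σ * (r ⬝ᵥ A *ᵥ r) ≤ (A *ᵥ r) ⬝ᵥ (A *ᵥ r) := by
  have h := (hA.mul_self_sub_smul hσ).dotProduct_mulVec_nonneg r
  have hsymm : A.IsSymm := isHermitian_iff_isSymm.mp hA.1
  rw [star_trivial, sub_mulVec, smul_mulVec, dotProduct_sub, dotProduct_smul, ← mulVec_mulVec,
    dotProduct_mulVec r A, ← mulVec_transpose, hsymm.eq, smul_eq_mul] at h
  linarith

end Matrix

/-- One step of randomized coordinate descent on a positive definite system Ax = b
contracts the A-norm error in expectation by the factor (1 − σ_min(A)/Tr(A)). -/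
theorem coordinate_descent_one_step_contraction {n : ℕ} (A : Matrix (Fin n) (Fin n) ℝ)
    (hA : A.PosDef) (b x x0 : Fin n → ℝ) (hx0 : A.mulVec x0 = b)
    (σmin : ℝ) (hσ : IsLeast (spectrum ℝ A) σmin)
    (xp : Fin n → Fin n → ℝ)
    (hxp : ∀ i, xp i = x + ((b i - A.mulVec x i) / A i i) • (Pi.single i 1 : Fin n → ℝ)) :
    ∑ i, (A i i / A.trace) * ((xp i - x0) ⬝ᵥ A.mulVec (xp i - x0)) ≤
      (1 - σmin / A.trace) * ((x - x0) ⬝ᵥ A.mulVec (x - x0)) := by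
  set S := (x - x0) ⬝ᵥ A *ᵥ (x - x0)
  have hsymm : A.IsSymm := isHermitian_iff_isSymm.mp hA.1
  have hdiag : ∀ i, A i i ≠ 0 := fun i => hA.diag_pos.ne'
  have hT : 0 ≤ A.trace := hA.posSemidef.trace_nonneg
  have hS : 0 ≤ S := by
    simpa only [star_trivial] using hA.posSemidef.dotProduct_mulVec_nonneg (x - x0)
  have hstep : ∀ i, (xp i - x0) ⬝ᵥ A *ᵥ (xp i - x0) = S - (A *ᵥ (x - x0)) i ^ 2 / A i i :=
    fun i => hxp i ▸ hsymm.dotProduct_mulVec_coordinateDescentStep_sub_solution hx0 x (hdiag i)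
  simp only [hstep, sum_diag_div_trace_mul hdiag]
  calc A.trace / A.trace * S - (A *ᵥ (x - x0)) ⬝ᵥ (A *ᵥ (x - x0)) / A.trace
      ≤ S - σmin * S / A.trace := by
        gcongr
        · exact mul_le_of_le_one_left hS (div_self_le_one _)
        · exact hA.posSemidef.mul_dotProduct_mulVec_le hσ.2 (x - x0)
    _ = (1 - σmin / A.trace) * S := by ring
end

section
/- Randomized Gauss–Seidel for ridge regression with m > n converges linearly: E‖β_t − β°‖²_{X*X+λI} ≤ (1 − (σ_1² + λ)/(Σ_i σ_i² + nλ))^t ‖β_0 − β°‖²_{X*X+λI}, where σ_1 is the smallest singular value of X. -/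
/-!
Write `A = Xᵀ X + λ I` and `Q e = eᵀ A e`. Since `A β° = Xᵀ y`, the error `e = β - β°` of an
update of coordinate `j` is the exact minimisation of `Q` along that coordinate, which lowers
`Q e` by `(A e)_j ^ 2 / A_jj`. The sampling probabilities are `A_jj / tr A`, so the expected
decrease is `‖A e‖² / tr A`, and `A ≥ (σ₁² + λ) I` gives `‖A e‖² ≥ (σ₁² + λ) Q e`. This one-step
contraction by `1 - (σ₁² + λ) / tr A` is then iterated over the independent choices.
-/

open Matrix

/-- One step of randomized Gauss–Seidel for ridge regression: update coordinate j. -/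
noncomputable def rgsUpdate {m n : ℕ} (X : Matrix (Fin m) (Fin n) ℝ) (y : Fin m → ℝ)
    (lam : ℝ) (j : Fin n) (β : Fin n → ℝ) : Fin n → ℝ :=
  Function.update β j
    (β j + ((Xᵀ.mulVec (y - X.mulVec β)) j - lam * β j) / ((∑ i, (X i j) ^ 2) + lam))

/-- Iterate RGS along a given sequence of column choices. -/
noncomputable def rgsIter {m n : ℕ} (X : Matrix (Fin m) (Fin n) ℝ) (y : Fin m → ℝ)
    (lam : ℝ) : List (Fin n) → (Fin n → ℝ) → Fin n → ℝ
  | [], β => β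
  | j :: js, β => rgsIter X y lam js (rgsUpdate X y lam j β)

section CoordinateDescent

variable {ι : Type*} [Fintype ι] [DecidableEq ι]

/-- Exact minimisation of the quadratic form `e ↦ e ⬝ᵥ A *ᵥ e` along the `j`-th coordinate. -/
noncomputable def coordStep (A : Matrix ι ι ℝ) (j : ι) (e : ι → ℝ) : ι → ℝ :=
  e - ((A *ᵥ e) j / A j j) • Pi.single j 1

lemma dotProduct_mulVec_sub_smul_single {A : Matrix ι ι ℝ} (hA : A.IsSymm) (e : ι → ℝ)
    (s : ℝ) (j : ι) :
    (e - s • Pi.single j 1) ⬝ᵥ A *ᵥ (e - s • Pi.single j 1)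
      = e ⬝ᵥ A *ᵥ e - 2 * s * (A *ᵥ e) j + s ^ 2 * A j j := by
  have h_left : e ⬝ᵥ A *ᵥ Pi.single j 1 = (A *ᵥ e) j := by
    rw [dotProduct_mulVec, ← mulVec_transpose, hA.eq, dotProduct_single, mul_one]
  have h_right : Pi.single j 1 ⬝ᵥ A *ᵥ e = (A *ᵥ e) j := by
    rw [single_dotProduct, one_mul]
  have h_diag : Pi.single j 1 ⬝ᵥ A *ᵥ Pi.single j 1 = A j j := by
    simp [single_dotProduct, mulVec_single]
  simp only [mulVec_sub, mulVec_smul, dotProduct_sub, sub_dotProduct, dotProduct_smul,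
    smul_dotProduct, smul_eq_mul, h_left, h_right, h_diag]
  ring

lemma dotProduct_mulVec_coordStep {A : Matrix ι ι ℝ} (hA : A.IsSymm) {j : ι} (hj : A j j ≠ 0)
    (e : ι → ℝ) :
    coordStep A j e ⬝ᵥ A *ᵥ coordStep A j e = e ⬝ᵥ A *ᵥ e - (A *ᵥ e) j ^ 2 / A j j := by
  rw [coordStep, dotProduct_mulVec_sub_smul_single hA]
  field_simp
  ring

lemma sum_diag_mul_dotProduct_mulVec_coordStep {A : Matrix ι ι ℝ} (hA : A.IsSymm)
    (hdiag : ∀ j, A j j ≠ 0) (e : ι → ℝ) :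
    ∑ j, A j j * (coordStep A j e ⬝ᵥ A *ᵥ coordStep A j e)
      = A.trace * (e ⬝ᵥ A *ᵥ e) - (A *ᵥ e) ⬝ᵥ (A *ᵥ e) := by
  have hterm (j : ι) : A j j * (coordStep A j e ⬝ᵥ A *ᵥ coordStep A j e)
      = A j j * (e ⬝ᵥ A *ᵥ e) - (A *ᵥ e) j * (A *ᵥ e) j := by
    rw [dotProduct_mulVec_coordStep hA (hdiag j), mul_sub, mul_div_cancel₀ _ (hdiag j), sq]
  simp only [hterm, Finset.sum_sub_distrib, ← Finset.sum_mul]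
  rfl

/-- With `B = A - c • 1 ≥ 0`: `A ^ 2 - c • A = B ^ 2 + c • B ≥ 0`. -/
lemma mul_dotProduct_mulVec_le {A : Matrix ι ι ℝ} {c : ℝ} (hc : 0 ≤ c)
    (hA : (A - c • 1).PosSemidef) (e : ι → ℝ) :
    c * (e ⬝ᵥ A *ᵥ e) ≤ (A *ᵥ e) ⬝ᵥ (A *ᵥ e) := by
  set B := A - c • 1
  have hAB : A = B + c • 1 := by simp [B]
  rw [hAB]
  have hB : 0 ≤ e ⬝ᵥ B *ᵥ e := hA.dotProduct_mulVec_nonneg e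
  simp only [add_mulVec, smul_mulVec, one_mulVec, dotProduct_add, add_dotProduct,
    dotProduct_smul, smul_dotProduct, smul_eq_mul, dotProduct_comm (B *ᵥ e) e]
  have hBe : 0 ≤ B *ᵥ e ⬝ᵥ B *ᵥ e := by simpa using dotProduct_self_star_nonneg (B *ᵥ e)
  nlinarith [mul_nonneg hc hB]

lemma nonempty_of_mem_spectrum {R : Type*} [CommRing R] {A : Matrix ι ι R} {r : R}
    (h : r ∈ spectrum R A) : Nonempty ι := by
  by_contra hι
  rw [not_nonempty_iff] at hι
  exact h (isUnit_of_subsingleton _)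

lemma posSemidef_sub_smul_one_of_mem_lowerBounds_spectrum {A : Matrix ι ι ℝ} (hA : A.IsSymm) {c : ℝ}
    (hc : c ∈ lowerBounds (spectrum ℝ A)) : (A - c • 1).PosSemidef := by
  refine posSemidef_iff_isHermitian_and_spectrum_nonneg.2
    ⟨isHermitian_iff_isSymm.2 (hA.sub (isSymm_one.smul c)), ?_⟩
  rw [← Algebra.algebraMap_eq_smul_one, ← spectrum.sub_singleton_eq]
  rintro _ ⟨μ, hμ, _, rfl, rfl⟩
  simpa using hc hμ

lemma le_trace_of_posSemidef_sub_smul_one [Nonempty ι] {A : Matrix ι ι ℝ} {c : ℝ} (hc : 0 ≤ c)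
    (hA : (A - c • 1).PosSemidef) : c ≤ A.trace := by
  have hdiag (j : ι) : c ≤ A j j := by simpa using hA.diag_nonneg (i := j)
  obtain ⟨j⟩ := ‹Nonempty ι›
  exact (hdiag j).trans (Finset.single_le_sum (fun i _ ↦ hc.trans (hdiag i)) (Finset.mem_univ j))

lemma sum_diag_div_trace_mul_coordStep_le [Nonempty ι] {A : Matrix ι ι ℝ} {c : ℝ}
    (hdiag : ∀ j, 0 < A j j) (hc : 0 ≤ c) (hAc : (A - c • 1).PosSemidef) (e : ι → ℝ) :
    ∑ j, A j j / A.trace * (coordStep A j e ⬝ᵥ A *ᵥ coordStep A j e)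
      ≤ (1 - c / A.trace) * (e ⬝ᵥ A *ᵥ e) := by
  have hA : A.IsSymm := by
    simpa using (isHermitian_iff_isSymm.1 hAc.isHermitian).add (isSymm_one.smul c)
  have htr : 0 < A.trace := Finset.sum_pos (fun j _ ↦ hdiag j) Finset.univ_nonempty
  simp only [div_mul_eq_mul_div, ← Finset.sum_div,
    sum_diag_mul_dotProduct_mulVec_coordStep hA fun j ↦ (hdiag j).ne']
  rw [div_le_iff₀ htr, sub_mul, one_mul, div_mul_eq_mul_div, sub_mul, div_mul_cancel₀ _ htr.ne']
  linarith [mul_dotProduct_mulVec_le hc hAc e]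

end CoordinateDescent

theorem sum_prod_mul_foldl_le_pow_mul {ι α : Type*} [Fintype ι] (f : ι → α → α) {p : ι → ℝ}
    (hp : ∀ j, 0 ≤ p j) (V : α → ℝ) {q : ℝ} (hq : 0 ≤ q)
    (hstep : ∀ x, ∑ j, p j * V (f j x) ≤ q * V x) (t : ℕ) (x : α) :
    ∑ js : Fin t → ι, (∏ s, p (js s)) * V ((List.ofFn js).foldl (fun x j ↦ f j x) x)
      ≤ q ^ t * V x := by
  induction t generalizing x with
  | zero => simp
  | succ t ih =>
    rw [← (Fin.consEquiv fun _ ↦ ι).sum_comp, Fintype.sum_prod_type]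
    calc _ = ∑ j, p j * ∑ js : Fin t → ι,
              (∏ s, p (js s)) * V ((List.ofFn js).foldl (fun x j ↦ f j x) (f j x)) := by
          simp [Fin.consEquiv, Fin.prod_univ_succ, List.ofFn_succ, Finset.mul_sum, mul_assoc]
      _ ≤ ∑ j, p j * (q ^ t * V (f j x)) :=
          Finset.sum_le_sum fun j _ ↦ mul_le_mul_of_nonneg_left (ih _) (hp j)
      _ = q ^ t * ∑ j, p j * V (f j x) := by
          rw [Finset.mul_sum]
          exact Finset.sum_congr rfl fun j _ ↦ mul_left_comm _ _ _
      _ ≤ q ^ t * (q * V x) := mul_le_mul_of_nonneg_left (hstep x) (pow_nonneg hq t)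
      _ = q ^ (t + 1) * V x := by ring

section RidgeRegression

variable {m n : ℕ} (X : Matrix (Fin m) (Fin n) ℝ) (y : Fin m → ℝ) (lam : ℝ)

lemma rgsIter_eq_foldl (l : List (Fin n)) (β : Fin n → ℝ) :
    rgsIter X y lam l β = l.foldl (fun β j ↦ rgsUpdate X y lam j β) β := by
  induction l generalizing β with
  | nil => rfl
  | cons j l ih => exact ih _

lemma diag_transpose_mul_self_add_smul_one (j : Fin n) :
    (Xᵀ * X + lam • (1 : Matrix (Fin n) (Fin n) ℝ)) j j = ∑ i, X i j ^ 2 + lam := by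
  simp [mul_apply, sq]

lemma trace_transpose_mul_self_add_smul_one :
    (Xᵀ * X + lam • (1 : Matrix (Fin n) (Fin n) ℝ)).trace = ∑ i, ∑ j, X i j ^ 2 + n * lam := by
  simp only [trace, diag, diag_transpose_mul_self_add_smul_one, Finset.sum_add_distrib, Finset.sum_const,
    Finset.card_univ, Fintype.card_fin, nsmul_eq_mul]
  rw [Finset.sum_comm]

lemma rgsUpdate_sub_eq_coordStep {βo : Fin n → ℝ}
    (hβo : (Xᵀ * X + lam • (1 : Matrix (Fin n) (Fin n) ℝ)) *ᵥ βo = Xᵀ *ᵥ y)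
    (j : Fin n) (β : Fin n → ℝ) :
    rgsUpdate X y lam j β - βo
      = coordStep (Xᵀ * X + lam • (1 : Matrix (Fin n) (Fin n) ℝ)) j (β - βo) := by
  have hres : Xᵀ *ᵥ (y - X *ᵥ β) - lam • β
      = -((Xᵀ * X + lam • (1 : Matrix (Fin n) (Fin n) ℝ)) *ᵥ (β - βo)) := by
    rw [mulVec_sub (Xᵀ * X + _), hβo, add_mulVec, smul_mulVec, one_mulVec, mulVec_sub,
      ← mulVec_mulVec]
    abel
  have hres_j := congrFun hres j
  simp only [Pi.sub_apply, Pi.smul_apply, Pi.neg_apply, smul_eq_mul] at hres_j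
  ext k
  rcases eq_or_ne k j with rfl | hk
  · simp only [rgsUpdate, coordStep, Pi.sub_apply, Function.update_self, Pi.smul_apply,
      Pi.single_eq_same, smul_eq_mul, mul_one, diag_transpose_mul_self_add_smul_one, hres_j]
    ring
  · simp [rgsUpdate, coordStep, Function.update_of_ne hk, Pi.single_eq_of_ne hk]

end RidgeRegression

theorem rgs_ridge_linear_convergence_general {m n : ℕ}
    (X : Matrix (Fin m) (Fin n) ℝ) (y : Fin m → ℝ) (lam : ℝ) (hlam : 0 < lam)
    (σ1 : ℝ) (hσ : IsLeast (spectrum ℝ (Xᵀ * X)) (σ1 ^ 2))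
    (βo : Fin n → ℝ)
    (hβo : (Xᵀ * X + lam • (1 : Matrix (Fin n) (Fin n) ℝ)).mulVec βo = Xᵀ.mulVec y)
    (β0 : Fin n → ℝ) (t : ℕ) :
    ∑ js : Fin t → Fin n,
        (∏ s, (((∑ i, (X i (js s)) ^ 2) + lam) / ((∑ i, ∑ j, (X i j) ^ 2) + n * lam))) *
          ((rgsIter X y lam (List.ofFn js) β0 - βo) ⬝ᵥ
            (Xᵀ * X + lam • (1 : Matrix (Fin n) (Fin n) ℝ)).mulVec
              (rgsIter X y lam (List.ofFn js) β0 - βo)) ≤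
      (1 - (σ1 ^ 2 + lam) / ((∑ i, ∑ j, (X i j) ^ 2) + n * lam)) ^ t *
        ((β0 - βo) ⬝ᵥ
          (Xᵀ * X + lam • (1 : Matrix (Fin n) (Fin n) ℝ)).mulVec (β0 - βo)) := by
  set A := Xᵀ * X + lam • (1 : Matrix (Fin n) (Fin n) ℝ) with hA
  have : Nonempty (Fin n) := nonempty_of_mem_spectrum hσ.1
  have hc : 0 ≤ σ1 ^ 2 + lam := by positivity
  have hAc : (A - (σ1 ^ 2 + lam) • 1).PosSemidef := by
    rw [hA, add_smul, add_sub_add_right_eq_sub]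
    exact posSemidef_sub_smul_one_of_mem_lowerBounds_spectrum (transpose_mul _ _) hσ.2
  have hdiag (j : Fin n) : 0 < A j j := by
    rw [hA, diag_transpose_mul_self_add_smul_one]
    positivity
  have htr : 0 < A.trace := (add_pos_of_nonneg_of_pos (sq_nonneg σ1) hlam).trans_le
    (le_trace_of_posSemidef_sub_smul_one hc hAc)
  have hq : 0 ≤ 1 - (σ1 ^ 2 + lam) / A.trace :=
    sub_nonneg.2 (div_le_one_of_le₀ (le_trace_of_posSemidef_sub_smul_one hc hAc) htr.le)
  simp only [rgsIter_eq_foldl, ← diag_transpose_mul_self_add_smul_one,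
    ← trace_transpose_mul_self_add_smul_one]
  refine sum_prod_mul_foldl_le_pow_mul _ (fun j ↦ div_nonneg (hdiag j).le htr.le)
    (fun β ↦ (β - βo) ⬝ᵥ A *ᵥ (β - βo)) hq (fun β ↦ ?_) t β0
  simpa only [rgsUpdate_sub_eq_coordStep X y lam hβo] using
    sum_diag_div_trace_mul_coordStep_le hdiag hc hAc (β - βo)

/-- Randomized Gauss–Seidel for ridge regression with m > n converges linearly:
E‖β_t − β°‖²_{XᵀX+λI} ≤ (1 − (σ₁² + λ)/(Σᵢ σᵢ² + nλ))ᵗ ‖β₀ − β°‖²_{XᵀX+λI},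
where columns are chosen with probability (‖X_{(j)}‖² + λ)/(‖X‖_F² + nλ) and
σ₁ is the smallest singular value of X (Σᵢ σᵢ² = ‖X‖_F²). -/
theorem rgs_ridge_linear_convergence {m n : ℕ} (hmn : n < m)
    (X : Matrix (Fin m) (Fin n) ℝ) (y : Fin m → ℝ) (lam : ℝ) (hlam : 0 < lam)
    (σ1 : ℝ) (hσ1 : 0 ≤ σ1) (hσ : IsLeast (spectrum ℝ (Xᵀ * X)) (σ1 ^ 2))
    (βo : Fin n → ℝ)
    (hβo : (Xᵀ * X + lam • (1 : Matrix (Fin n) (Fin n) ℝ)).mulVec βo = Xᵀ.mulVec y)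
    (β0 : Fin n → ℝ) (t : ℕ) :
    ∑ js : Fin t → Fin n,
        (∏ s, (((∑ i, (X i (js s)) ^ 2) + lam) / ((∑ i, ∑ j, (X i j) ^ 2) + n * lam))) *
          ((rgsIter X y lam (List.ofFn js) β0 - βo) ⬝ᵥ
            (Xᵀ * X + lam • (1 : Matrix (Fin n) (Fin n) ℝ)).mulVec
              (rgsIter X y lam (List.ofFn js) β0 - βo)) ≤
      (1 - (σ1 ^ 2 + lam) / ((∑ i, ∑ j, (X i j) ^ 2) + n * lam)) ^ t *
        ((β0 - βo) ⬝ᵥ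
          (Xᵀ * X + lam • (1 : Matrix (Fin n) (Fin n) ℝ)).mulVec (β0 - βo)) :=
  rgs_ridge_linear_convergence_general X y lam hlam σ1 hσ βo hβo β0 t
end

section
/- The RGS update for ridge regression preserves the normal-equation orthogonality: if β⁺ differs from β only in coordinate j with β⁺_j = β_j + (X_{(j)}*(y − Xβ) − λβ_j)/(‖X_{(j)}‖² + λ), and (X*X + λI)β° = X*y, then (β⁺ − β)*(X*X + λI)(β⁺ − β°) = 0. -/
open Matrix

/-!
With `A = XᵀX + λI` and `b = Xᵀy`, the RGS update is one Gauss–Seidel step for `A β = b` in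
coordinate `j`: it moves `β` along `e_j` by `c = (b - Aβ)_j / A_jj`, which makes the `j`-th residual
of `A β⁺ = b` vanish. Since `A β° = b`, the left-hand side is `c (A (β⁺ - β°))_j = c (Aβ⁺ - b)_j = 0`.
When `A_jj = 0`, division by zero makes `c = 0` and the claim is trivial.
-/

section GaussSeidel

variable {ι K : Type*} [Fintype ι] [DecidableEq ι] [Field K]

def gaussSeidelStep (A : Matrix ι ι K) (b β : ι → K) (j : ι) : ι → K :=
  Function.update β j (β j + (b - A *ᵥ β) j / A j j)

theorem gaussSeidelStep_eq_add_single (A : Matrix ι ι K) (b β : ι → K) (j : ι) :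
    gaussSeidelStep A b β j = β + Pi.single j ((b - A *ᵥ β) j / A j j) := by
  ext i
  rcases eq_or_ne i j with rfl | hij
  · simp [gaussSeidelStep]
  · simp [gaussSeidelStep, hij]

theorem gaussSeidelStep_sub_dotProduct_mulVec_sub_eq_zero (A : Matrix ι ι K) {b βo : ι → K}
    (hβo : A *ᵥ βo = b) (β : ι → K) (j : ι) :
    (gaussSeidelStep A b β j - β) ⬝ᵥ A *ᵥ (gaussSeidelStep A b β j - βo) = 0 := by
  set c := (b - A *ᵥ β) j / A j j
  have hresidual : c * ((A *ᵥ β) j + A j j * c - b j) = 0 := by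
    by_cases hA : A j j = 0
    · simp [c, hA]
    · have : A j j * c = b j - (A *ᵥ β) j := by
        rw [mul_div_cancel₀ _ hA, Pi.sub_apply]
      rw [this]; ring
  rw [gaussSeidelStep_eq_add_single, add_sub_cancel_left, single_dotProduct, mulVec_sub, hβo,
    mulVec_add, mulVec_single]
  simp only [Pi.add_apply, Pi.sub_apply, Pi.smul_apply, col_apply, op_smul_eq_mul]
  exact hresidual

end GaussSeidel

section Ridge

variable {κ ι R : Type*} [Fintype κ] [DecidableEq ι] [CommRing R]

theorem transpose_mul_self_add_smul_one_apply_self (X : Matrix κ ι R) (lam : R) (j : ι) :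
    (Xᵀ * X + lam • (1 : Matrix ι ι R)) j j = ∑ i, X i j ^ 2 + lam := by
  simp [mul_apply, sq]

theorem transpose_mulVec_sub_ridge_mulVec [Fintype ι] (X : Matrix κ ι R) (y : κ → R) (lam : R)
    (β : ι → R) :
    Xᵀ *ᵥ y - (Xᵀ * X + lam • (1 : Matrix ι ι R)) *ᵥ β = Xᵀ *ᵥ (y - X *ᵥ β) - lam • β := by
  rw [add_mulVec, smul_mulVec, one_mulVec, ← mulVec_mulVec, mulVec_sub, sub_add_eq_sub_sub]

end Ridge

theorem rgs_update_orthogonality_general {m n : ℕ} (X : Matrix (Fin m) (Fin n) ℝ)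
    (y : Fin m → ℝ) (lam : ℝ) (β βo : Fin n → ℝ)
    (hβo : (Xᵀ * X + lam • (1 : Matrix (Fin n) (Fin n) ℝ)).mulVec βo = Xᵀ.mulVec y)
    (j : Fin n) (βp : Fin n → ℝ)
    (hβp : βp = Function.update β j
      (β j + ((Xᵀ.mulVec (y - X.mulVec β)) j - lam * β j) / ((∑ i, (X i j) ^ 2) + lam))) :
    (βp - β) ⬝ᵥ (Xᵀ * X + lam • (1 : Matrix (Fin n) (Fin n) ℝ)).mulVec (βp - βo) = 0 := by
  have hstep : βp = gaussSeidelStep (Xᵀ * X + lam • 1) (Xᵀ *ᵥ y) β j := by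
    rw [hβp, gaussSeidelStep, transpose_mul_self_add_smul_one_apply_self,
      transpose_mulVec_sub_ridge_mulVec, Pi.sub_apply, Pi.smul_apply, smul_eq_mul]
  rw [hstep]
  exact gaussSeidelStep_sub_dotProduct_mulVec_sub_eq_zero _ hβo β j

/-- The RGS update for ridge regression preserves the normal-equation orthogonality:
(β⁺ − β)ᵀ(XᵀX + λI)(β⁺ − β°) = 0. -/
theorem rgs_update_orthogonality {m n : ℕ} (X : Matrix (Fin m) (Fin n) ℝ)
    (y : Fin m → ℝ) (lam : ℝ) (hlam : 0 < lam) (β βo : Fin n → ℝ)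
    (hβo : (Xᵀ * X + lam • (1 : Matrix (Fin n) (Fin n) ℝ)).mulVec βo = Xᵀ.mulVec y)
    (j : Fin n) (βp : Fin n → ℝ)
    (hβp : βp = Function.update β j
      (β j + ((Xᵀ.mulVec (y - X.mulVec β)) j - lam * β j) / ((∑ i, (X i j) ^ 2) + lam))) :
    (βp - β) ⬝ᵥ (Xᵀ * X + lam • (1 : Matrix (Fin n) (Fin n) ℝ)).mulVec (βp - βo) = 0 :=
  rgs_update_orthogonality_general X y lam β βo hβo j βp hβp
end

section
/- The eigenvalues of the augmented matrix A = [[√λ I_m, X],[X*, −√λ I_n]] all have absolute value √(σ² + λ) for some singular value σ of X (or equal ±√λ); consequently, the condition number of A equals the square root of the condition number of X*X + λI_n when m = n. -/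
/-!
The square of the augmented matrix `A = [[s I, X], [Xᵀ, -s I]]` is block diagonal,
`A² = diag(X Xᵀ + s² I, Xᵀ X + s² I)`, so `det(μ - A) det(μ + A)` factors as
`det((μ² - s²) - X Xᵀ) det((μ² - s²) - Xᵀ X)`. Hence `±μ` is an eigenvalue of `A` exactly when
`μ² - s²` is an eigenvalue of `X Xᵀ` or `Xᵀ X`, whose nonzero spectra agree (and, for square `X`,
whose whole spectra agree). For square `X` the absolute eigenvalues of `A` are therefore exactly
the square roots of the eigenvalues of `Xᵀ X + s² I`, and `√` is monotone, so it carries the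
largest and smallest of the latter to those of the former.
-/

open Matrix Polynomial

theorem spectrum.mem_add_smul_one_iff {R A : Type*} [CommRing R] [Ring A] [Algebra R A] {a : A}
    {r s : R} : r ∈ spectrum R (a + s • 1) ↔ r - s ∈ spectrum R a := by
  rw [← spectrum.add_mem_add_iff (r := r - s) (s := s), sub_add_cancel,
    Algebra.algebraMap_eq_smul_one, add_comm]

namespace Matrix

variable {K : Type*} [Field K] {m n : Type*} [Fintype m] [Fintype n] [DecidableEq n]

theorem mem_spectrum_iff_det_sub_eq_zero {A : Matrix n n K} {t : K} :
    t ∈ spectrum K A ↔ (t • 1 - A).det = 0 := by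
  rw [spectrum.mem_iff, Algebra.algebraMap_eq_smul_one, isUnit_iff_isUnit_det,
    isUnit_iff_ne_zero, not_ne_iff]

theorem mem_spectrum_mul_comm_of_ne_zero [DecidableEq m] (A : Matrix m n K) (B : Matrix n m K)
    {t : K} (ht : t ≠ 0) : t ∈ spectrum K (A * B) ↔ t ∈ spectrum K (B * A) := by
  have h := congrArg (eval t) (charpoly_mul_comm' A B)
  simp only [eval_mul, eval_pow, eval_X] at h
  simp only [mem_spectrum_iff_isRoot_charpoly, IsRoot.def]
  constructor <;> intro h' <;> simpa [h', ht] using h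

theorem spectrum_mul_comm (A B : Matrix n n K) : spectrum K (A * B) = spectrum K (B * A) := by
  ext t
  simp only [mem_spectrum_iff_isRoot_charpoly, charpoly_mul_comm]

theorem nonneg_of_mem_spectrum_transpose_mul_self (X : Matrix m n ℝ) {t : ℝ}
    (ht : t ∈ spectrum ℝ (Xᵀ * X)) : 0 ≤ t :=
  (posSemidef_iff_isHermitian_and_spectrum_nonneg.mp (posSemidef_conjTranspose_mul_self X)).2 ht

end Matrix

section Augmented

variable {m n : Type*} [Fintype m] [Fintype n] [DecidableEq m] [DecidableEq n]

def augmentedMatrix {R : Type*} [CommRing R] (s : R) (X : Matrix m n R) :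
    Matrix (m ⊕ n) (m ⊕ n) R :=
  fromBlocks (s • 1) X Xᵀ (-s • 1)

section CommRing

variable {R : Type*} [CommRing R] (s : R) (X : Matrix m n R)

theorem augmentedMatrix_mul_self :
    augmentedMatrix s X * augmentedMatrix s X =
      fromBlocks (X * Xᵀ + s ^ 2 • 1) 0 0 (Xᵀ * X + s ^ 2 • 1) := by
  simp only [augmentedMatrix, fromBlocks_multiply, Matrix.smul_mul, Matrix.mul_smul,
    Matrix.one_mul, Matrix.mul_one, Matrix.mul_neg, Matrix.neg_mul, smul_smul, neg_mul_neg,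
    neg_smul, add_neg_cancel, sq]
  rw [add_comm]

theorem det_sub_mul_det_add_augmentedMatrix (μ : R) :
    (μ • 1 - augmentedMatrix s X).det * (μ • 1 + augmentedMatrix s X).det =
      ((μ ^ 2 - s ^ 2) • 1 - X * Xᵀ).det * ((μ ^ 2 - s ^ 2) • 1 - Xᵀ * X).det := by
  have hsq : (μ • 1 - augmentedMatrix s X) * (μ • 1 + augmentedMatrix s X) =
      μ ^ 2 • 1 - augmentedMatrix s X * augmentedMatrix s X := by
    rw [← (Commute.smul_left (Commute.one_left _) μ).mul_self_sub_mul_self_eq', smul_mul_smul,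
      one_mul, sq]
  have hblock : μ ^ 2 • (1 : Matrix (m ⊕ n) (m ⊕ n) R) -
      augmentedMatrix s X * augmentedMatrix s X =
      fromBlocks ((μ ^ 2 - s ^ 2) • 1 - X * Xᵀ) 0 0 ((μ ^ 2 - s ^ 2) • 1 - Xᵀ * X) := by
    rw [augmentedMatrix_mul_self, ← fromBlocks_one, fromBlocks_smul, sub_eq_add_neg,
      fromBlocks_neg, fromBlocks_add]
    congr 1 <;> simp only [sub_smul, smul_zero, neg_zero, add_zero] <;> abel
  rw [← det_mul, hsq, hblock, det_fromBlocks_zero₁₂]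

end CommRing

variable {K : Type*} [Field K] (s : K) (X : Matrix m n K)

theorem mem_spectrum_augmentedMatrix_or_neg_iff (μ : K) :
    (μ ∈ spectrum K (augmentedMatrix s X) ∨ -μ ∈ spectrum K (augmentedMatrix s X)) ↔
      (μ ^ 2 - s ^ 2 ∈ spectrum K (X * Xᵀ) ∨ μ ^ 2 - s ^ 2 ∈ spectrum K (Xᵀ * X)) := by
  have hneg : (-μ) • (1 : Matrix (m ⊕ n) (m ⊕ n) K) - augmentedMatrix s X =
      -(μ • 1 + augmentedMatrix s X) := by
    rw [neg_smul, neg_add']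
  simp only [mem_spectrum_iff_det_sub_eq_zero, hneg, det_neg, mul_eq_zero, pow_eq_zero_iff',
    neg_eq_zero, one_ne_zero, false_and, false_or]
  rw [← mul_eq_zero, ← mul_eq_zero, det_sub_mul_det_add_augmentedMatrix]

theorem sq_sub_sq_mem_spectrum_or_sq_eq_of_mem_spectrum_augmentedMatrix {μ : K}
    (hμ : μ ∈ spectrum K (augmentedMatrix s X)) :
    μ ^ 2 - s ^ 2 ∈ spectrum K (Xᵀ * X) ∨ μ ^ 2 = s ^ 2 := by
  by_cases h0 : μ ^ 2 - s ^ 2 = 0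
  · exact Or.inr (sub_eq_zero.mp h0)
  · rcases (mem_spectrum_augmentedMatrix_or_neg_iff s X μ).mp (Or.inl hμ) with h | h
    · exact Or.inl ((mem_spectrum_mul_comm_of_ne_zero X Xᵀ h0).mp h)
    · exact Or.inl h

end Augmented

theorem abs_spectrum_augmentedMatrix {n : Type*} [Fintype n] [DecidableEq n]
    (s : ℝ) (X : Matrix n n ℝ) :
    {t : ℝ | ∃ μ ∈ spectrum ℝ (augmentedMatrix s X), t = |μ|} =
      Real.sqrt '' spectrum ℝ (Xᵀ * X + s ^ 2 • 1) := by
  ext t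
  simp only [Set.mem_ofPred_eq, Set.mem_image, spectrum.mem_add_smul_one_iff]
  constructor
  · rintro ⟨μ, hμ, rfl⟩
    refine ⟨μ ^ 2, ?_, Real.sqrt_sq_eq_abs μ⟩
    have h := (mem_spectrum_augmentedMatrix_or_neg_iff s X μ).mp (Or.inl hμ)
    rwa [spectrum_mul_comm X Xᵀ, or_self] at h
  · rintro ⟨u, hu, rfl⟩
    have hu0 : 0 ≤ u := by
      nlinarith [nonneg_of_mem_spectrum_transpose_mul_self X hu, sq_nonneg s]
    have hroot : Real.sqrt u ^ 2 - s ^ 2 ∈ spectrum ℝ (Xᵀ * X) := by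
      rwa [Real.sq_sqrt hu0]
    rcases (mem_spectrum_augmentedMatrix_or_neg_iff s X _).mpr (Or.inr hroot) with h | h
    · exact ⟨_, h, (abs_of_nonneg (Real.sqrt_nonneg u)).symm⟩
    · exact ⟨_, h, by rw [abs_neg, abs_of_nonneg (Real.sqrt_nonneg u)]⟩

/-- Every eigenvalue μ of the augmented matrix A = [[√λ I, X],[Xᵀ, −√λ I]] satisfies
μ² = σ² + λ for some singular value σ of X (i.e. μ² − λ is an eigenvalue of XᵀX) or
μ² = λ; consequently, when m = n the condition number of A (ratio of largest to
smallest absolute eigenvalue) is the square root of the condition number of XᵀX + λI. -/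
theorem augmented_matrix_eigenvalues {m n : ℕ} (X : Matrix (Fin m) (Fin n) ℝ)
    (lam : ℝ) (hlam : 0 < lam) :
    (∀ μ ∈ spectrum ℝ
        (Matrix.fromBlocks (Real.sqrt lam • (1 : Matrix (Fin m) (Fin m) ℝ)) X
          Xᵀ (-(Real.sqrt lam) • (1 : Matrix (Fin n) (Fin n) ℝ))),
        μ ^ 2 - lam ∈ spectrum ℝ (Xᵀ * X) ∨ μ ^ 2 = lam) ∧
    (m = n → ∀ a b c d : ℝ,
      IsGreatest {t : ℝ | ∃ μ ∈ spectrum ℝ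
          (Matrix.fromBlocks (Real.sqrt lam • (1 : Matrix (Fin m) (Fin m) ℝ)) X
            Xᵀ (-(Real.sqrt lam) • (1 : Matrix (Fin n) (Fin n) ℝ))), t = |μ|} a →
      IsLeast {t : ℝ | ∃ μ ∈ spectrum ℝ
          (Matrix.fromBlocks (Real.sqrt lam • (1 : Matrix (Fin m) (Fin m) ℝ)) X
            Xᵀ (-(Real.sqrt lam) • (1 : Matrix (Fin n) (Fin n) ℝ))), t = |μ|} b →
      IsGreatest (spectrum ℝ (Xᵀ * X + lam • (1 : Matrix (Fin n) (Fin n) ℝ))) c →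
      IsLeast (spectrum ℝ (Xᵀ * X + lam • (1 : Matrix (Fin n) (Fin n) ℝ))) d →
      a / b = Real.sqrt (c / d)) := by
  have hs : Real.sqrt lam ^ 2 = lam := Real.sq_sqrt hlam.le
  refine ⟨fun μ hμ => ?_, fun hmn a b c d ha hb hc hd => ?_⟩
  · simpa only [hs] using sq_sub_sq_mem_spectrum_or_sq_eq_of_mem_spectrum_augmentedMatrix _ X hμ
  · subst hmn
    have hA := abs_spectrum_augmentedMatrix (Real.sqrt lam) X
    rw [hs] at hA
    rw [← augmentedMatrix.eq_1, hA] at ha hb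
    have hd0 : 0 ≤ d := by
      have := nonneg_of_mem_spectrum_transpose_mul_self X (spectrum.mem_add_smul_one_iff.mp hd.1)
      linarith
    rw [ha.unique (Real.sqrt_monotone.map_isGreatest hc),
      hb.unique (Real.sqrt_monotone.map_isLeast hd), Real.sqrt_div' c hd0]
end
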